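/- Fix ε > 0, β ∈ (0,1), an even integer d > 4(e^{2ε}−1)²·ln(2/β), and n ε-private randomizers R_1,…,R_n from [d] to a countable message set 𝒴. If H is sampled uniformly among subsets of [d] of size d/2, then with probability at least 5/6 over the choice of H, both of the following hold with v = (e^{2ε}−1)·√((4/d)·ln(2/β)): for every i ∈ [n], Pr[ R_i(U) ∈ Leak(v, H, R_i) ] < 6βn, and for every i ∈ [n], Pr[ R_i(U_H) ∈ Leak(v, H, R_i) ] < 6·e^ε·βn. -/

import Mathlib

/-
For a fixed message `y`, `Pr[R(U_H) = y]` is the mean of `x ↦ R x y` over the half `H`, and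
`ε`-privacy confines these values to an interval of length `(e^{2ε} - 1) · Pr[R(U) = y]`.
A uniform `h`-subset of a `2h`-set arises by permuting `h` fixed pairs uniformly and keeping one
element of each pair, chosen independently; given the permutation, a centred subset sum is a sum
of `h` independent two-point variables, so Hoeffding's lemma bounds its moment generating function
by `exp (λ² h c² / 8)`. Hence `y` is `v`-leaky for at most a `β` fraction of the halves `H`, and
summing over messages gives `E_H Pr[R_i(U) ∈ Leak] ≤ β`. Markov's inequality and a union bound
over the `n` randomizers give the first bound with probability `5/6`, and
`Pr[R(U_H) = y] ≤ e^ε Pr[R(U) = y]` turns it into the second.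
-/

open scoped Classical

/-- `probU R S y` is the probability that a sample from `R(U_S)` (draw `x`
uniformly from `S`, then sample a message from `R x`) equals `y`, where
`R x y` is the probability that randomizer `R` on input `x` outputs `y`. -/
noncomputable def probU {d : ℕ} {Y : Type*} (R : Fin d → Y → ℝ)
    (S : Finset (Fin d)) (y : Y) : ℝ :=
  (∑ x ∈ S, R x y) / (S.card : ℝ)

/-- A message `y` is `v`-leaky with respect to `H, R` if
`|ln (Pr[R(U_H) = y] / Pr[R(U) = y])| > v`. -/
noncomputable def leaky {d : ℕ} {Y : Type*} (R : Fin d → Y → ℝ)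
    (H : Finset (Fin d)) (v : ℝ) (y : Y) : Prop :=
  v < |Real.log (probU R H y / probU R Finset.univ y)|

/-- `probLeak R S H v` is `Pr[R(U_S) ∈ Leak(v, H, R)]`, the probability that a
sample from `R(U_S)` lands in the set of `v`-leaky messages w.r.t. `H, R`. -/
noncomputable def probLeak {d : ℕ} {Y : Type*} (R : Fin d → Y → ℝ)
    (S H : Finset (Fin d)) (v : ℝ) : ℝ :=
  ∑' y : Y, if leaky R H v y then probU R S y else 0

open Finset Real

theorem exp_mul_add_exp_mul_le {c x y : ℝ} (lam : ℝ) (h : |x - y| ≤ c) :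
    exp (lam * x) + exp (lam * y) ≤ 2 * exp (lam * (x + y) / 2 + lam ^ 2 * c ^ 2 / 8) := by
  have hcosh : exp (lam * x) + exp (lam * y)
      = 2 * exp (lam * (x + y) / 2) * cosh (lam * (x - y) / 2) := by
    rw [cosh_eq, show lam * x = lam * (x + y) / 2 + lam * (x - y) / 2 by ring,
      show lam * y = lam * (x + y) / 2 + -(lam * (x - y) / 2) by ring, exp_add, exp_add]
    ring
  have hsq : (lam * (x - y) / 2) ^ 2 / 2 ≤ lam ^ 2 * c ^ 2 / 8 := by
    have : (x - y) ^ 2 ≤ c ^ 2 := sq_le_sq' (abs_le.1 h).1 (abs_le.1 h).2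
    have := mul_le_mul_of_nonneg_left this (sq_nonneg lam)
    linarith
  calc exp (lam * x) + exp (lam * y)
      ≤ 2 * exp (lam * (x + y) / 2) * exp (lam ^ 2 * c ^ 2 / 8) := by
        rw [hcosh]
        gcongr
        exact (cosh_le_exp_half_sq _).trans (exp_le_exp.2 hsq)
    _ = 2 * exp (lam * (x + y) / 2 + lam ^ 2 * c ^ 2 / 8) := by rw [mul_assoc, ← exp_add]

section Pairs

variable {ι : Type*} [Fintype ι]

theorem prod_exp_add_exp_le {g : ι × Bool → ℝ} {c : ℝ} (hsum : ∑ x, g x = 0)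
    (hc : ∀ x x', |g x - g x'| ≤ c) (lam : ℝ) :
    ∏ j, (exp (lam * g (j, false)) + exp (lam * g (j, true)))
      ≤ 2 ^ Fintype.card ι * exp (lam ^ 2 * Fintype.card ι * c ^ 2 / 8) := by
  have hpairs : ∑ j, (g (j, false) + g (j, true)) = 0 := by
    rw [← hsum, Fintype.sum_prod_type]
    simp [add_comm]
  calc ∏ j, (exp (lam * g (j, false)) + exp (lam * g (j, true)))
      ≤ ∏ j : ι, 2 * exp (lam * (g (j, false) + g (j, true)) / 2 + lam ^ 2 * c ^ 2 / 8) :=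
        prod_le_prod (fun j _ => by positivity) fun j _ => exp_mul_add_exp_mul_le lam (hc _ _)
    _ = 2 ^ Fintype.card ι * exp (lam ^ 2 * Fintype.card ι * c ^ 2 / 8) := by
        rw [prod_mul_distrib, prod_const, ← exp_sum, sum_add_distrib, ← sum_div, ← mul_sum,
          hpairs, sum_const, card_univ, nsmul_eq_mul]
        ring_nf

variable [DecidableEq ι]

def flipOn (A : Finset ι) : Equiv.Perm (ι × Bool) :=
  Equiv.prodShear (Equiv.refl ι) fun j => if j ∈ A then Equiv.boolNot else Equiv.refl Bool

theorem sum_finset_exp_sum_flipOn (g : ι × Bool → ℝ) (lam : ℝ) :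
    ∑ A : Finset ι, exp (lam * ∑ j, g (flipOn A (j, true)))
      = ∏ j, (exp (lam * g (j, false)) + exp (lam * g (j, true))) := by
  rw [Fintype.prod_add]
  refine Fintype.sum_congr _ _ fun A => ?_
  rw [mul_sum, exp_sum, ← prod_mul_prod_compl A]
  congr 1 <;> refine prod_congr rfl fun j hj => ?_
  · simp [flipOn, hj]
  · simp [flipOn, mem_compl.1 hj]

theorem sum_perm_exp_sum_le {b : ι × Bool → ℝ} {c : ℝ} (hsum : ∑ x, b x = 0)
    (hc : ∀ x x', |b x - b x'| ≤ c) (lam : ℝ) :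
    ∑ σ : Equiv.Perm (ι × Bool), exp (lam * ∑ j, b (σ (j, true)))
      ≤ Fintype.card (Equiv.Perm (ι × Bool)) * exp (lam ^ 2 * Fintype.card ι * c ^ 2 / 8) := by
  set F : Equiv.Perm (ι × Bool) → ℝ := fun σ => exp (lam * ∑ j, b (σ (j, true)))
  -- Averaging over the flips `σ ↦ σ * flipOn A` decouples the choices within the pairs.
  have hflip : ∀ A, ∑ σ, F (σ * flipOn A) = ∑ σ, F σ := fun A =>
    Fintype.sum_equiv (Equiv.mulRight (flipOn A)) _ _ fun _ => rfl
  refine le_of_mul_le_mul_left ?_ (by positivity : (0 : ℝ) < 2 ^ Fintype.card ι)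
  calc (2 : ℝ) ^ Fintype.card ι * ∑ σ, F σ
      = ∑ A : Finset ι, ∑ σ, F (σ * flipOn A) := by
        simp [hflip, Fintype.card_finset]
    _ = ∑ σ : Equiv.Perm (ι × Bool), ∏ j, (exp (lam * b (σ (j, false)))
          + exp (lam * b (σ (j, true)))) := by
        rw [sum_comm]
        exact Fintype.sum_congr _ _ fun σ => sum_finset_exp_sum_flipOn (b ∘ σ) lam
    _ ≤ ∑ _σ : Equiv.Perm (ι × Bool), 2 ^ Fintype.card ι
          * exp (lam ^ 2 * Fintype.card ι * c ^ 2 / 8) := by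
        gcongr with σ
        exact prod_exp_add_exp_le (by rwa [Equiv.sum_comp σ b]) (fun _ _ => hc _ _) lam
    _ = _ := by simp only [sum_const, card_univ, nsmul_eq_mul]; ring

end Pairs

section UniformSubsets

variable {α : Type*} [Fintype α]

theorem sum_powersetCard_map_perm {M : Type*} [AddCommMonoid M] (G : Finset α → M)
    (σ : Equiv.Perm α) (k : ℕ) :
    ∑ H ∈ powersetCard k (univ : Finset α), G (H.map σ.toEmbedding)
      = ∑ H ∈ powersetCard k (univ : Finset α), G H := by
  conv_rhs => rw [← map_univ_equiv σ, powersetCard_map, sum_map]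
  rfl

theorem card_perm_mul_sum_powersetCard [DecidableEq α] (G : Finset α → ℝ) (F : Finset α) :
    Fintype.card (Equiv.Perm α) * ∑ H ∈ powersetCard #F (univ : Finset α), G H
      = #(powersetCard #F (univ : Finset α))
        * ∑ σ : Equiv.Perm α, G (F.map σ.toEmbedding) := by
  set P := powersetCard #F (univ : Finset α)
  have horbit : ∀ H ∈ P, ∑ σ : Equiv.Perm α, G (H.map σ.toEmbedding)
      = ∑ σ : Equiv.Perm α, G (F.map σ.toEmbedding) := by
    intro H hH
    obtain ⟨ρ, rfl⟩ := Equiv.Perm.exists_map_finset_eq F H (mem_powersetCard.1 hH).2.symm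
    refine Fintype.sum_equiv (Equiv.mulRight ρ) _ _ fun σ => ?_
    rw [map_map]
    rfl
  calc Fintype.card (Equiv.Perm α) * ∑ H ∈ P, G H
      = ∑ σ : Equiv.Perm α, ∑ H ∈ P, G (H.map σ.toEmbedding) := by
        simp [P, sum_powersetCard_map_perm]
    _ = ∑ H ∈ P, ∑ σ : Equiv.Perm α, G (H.map σ.toEmbedding) := sum_comm
    _ = #P * ∑ σ : Equiv.Perm α, G (F.map σ.toEmbedding) := by
        rw [sum_congr rfl horbit, sum_const, nsmul_eq_mul]

end UniformSubsets

section Hoeffding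

variable {γ : Type*} [Fintype γ] [DecidableEq γ] {h : ℕ} {b : γ → ℝ} {c : ℝ}

theorem sum_powersetCard_exp_sum_le (hcard : Fintype.card γ = 2 * h) (hsum : ∑ x, b x = 0)
    (hc : ∀ x x', |b x - b x'| ≤ c) (lam : ℝ) :
    ∑ H ∈ powersetCard h (univ : Finset γ), exp (lam * ∑ x ∈ H, b x)
      ≤ #(powersetCard h (univ : Finset γ)) * exp (lam ^ 2 * h * c ^ 2 / 8) := by
  obtain ⟨e⟩ : Nonempty (Fin h × Bool ≃ γ) :=
    ⟨Fintype.equivOfCardEq (by simp [hcard, mul_comm])⟩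
  set F : Finset γ := univ.map ((Function.Embedding.sectL (Fin h) true).trans e.toEmbedding)
  have hF : #F = h := by simp [F]
  have hperm : ∑ σ : Equiv.Perm γ, exp (lam * ∑ x ∈ F.map σ.toEmbedding, b x)
      = ∑ τ : Equiv.Perm (Fin h × Bool), exp (lam * ∑ j, b (e (τ (j, true)))) := by
    refine (Fintype.sum_equiv e.permCongr _ _ fun τ => ?_).symm
    simp [F, Equiv.permCongr_apply]
  have hcardPerm : Fintype.card (Equiv.Perm (Fin h × Bool)) = Fintype.card (Equiv.Perm γ) :=
    Fintype.card_congr e.permCongr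
  have hsubsets := card_perm_mul_sum_powersetCard (fun H => exp (lam * ∑ x ∈ H, b x)) F
  rw [hF, hperm] at hsubsets
  have hmgf := sum_perm_exp_sum_le (b := b ∘ e) (by rwa [← Equiv.sum_comp e b] at hsum)
    (fun _ _ => hc _ _) lam
  simp only [Function.comp_apply, hcardPerm, Fintype.card_fin] at hmgf
  refine le_of_mul_le_mul_left ?_ (by positivity : (0 : ℝ) < Fintype.card (Equiv.Perm γ))
  calc _ = _ := hsubsets
    _ ≤ _ := mul_le_mul_of_nonneg_left hmgf (by positivity)
    _ = _ := by ring

theorem card_filter_le_sum_le (hcard : Fintype.card γ = 2 * h) (hh : 0 < h) (hsum : ∑ x, b x = 0)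
    (hc : ∀ x x', |b x - b x'| ≤ c) (hc0 : 0 < c) {s : ℝ} (hs : 0 ≤ s) :
    (#{H ∈ powersetCard h (univ : Finset γ) | s ≤ ∑ x ∈ H, b x} : ℝ)
      ≤ #(powersetCard h (univ : Finset γ)) * exp (-(2 * s ^ 2 / (h * c ^ 2))) := by
  set P := powersetCard h (univ : Finset γ)
  -- the minimiser of `lam ^ 2 * h * c ^ 2 / 8 - lam * s`
  set lam := 4 * s / (h * c ^ 2)
  have hlam : 0 ≤ lam := by positivity
  have hmarkov : #{H ∈ P | s ≤ ∑ x ∈ H, b x} * exp (lam * s)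
      ≤ ∑ H ∈ P, exp (lam * ∑ x ∈ H, b x) := by
    rw [← nsmul_eq_mul]
    refine (card_nsmul_le_sum _ _ _ fun H hH => ?_).trans
      (sum_le_sum_of_subset_of_nonneg (filter_subset _ _) fun _ _ _ => (exp_pos _).le)
    exact exp_le_exp.2 (mul_le_mul_of_nonneg_left (mem_filter.1 hH).2 hlam)
  have hexp : lam ^ 2 * h * c ^ 2 / 8 - lam * s = -(2 * s ^ 2 / (h * c ^ 2)) := by
    simp only [lam]
    field_simp
    ring
  rw [← hexp, sub_eq_add_neg, exp_add, ← mul_assoc, exp_neg, ← div_eq_mul_inv,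
    le_div_iff₀ (exp_pos _)]
  exact hmarkov.trans (sum_powersetCard_exp_sum_le hcard hsum hc lam)

theorem card_filter_le_abs_sum_le (hcard : Fintype.card γ = 2 * h) (hh : 0 < h)
    (hsum : ∑ x, b x = 0) (hc : ∀ x x', |b x - b x'| ≤ c) (hc0 : 0 < c) {s : ℝ}
    (hs : 0 ≤ s) :
    (#{H ∈ powersetCard h (univ : Finset γ) | s ≤ |∑ x ∈ H, b x|} : ℝ)
      ≤ 2 * #(powersetCard h (univ : Finset γ)) * exp (-(2 * s ^ 2 / (h * c ^ 2))) := by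
  set P := powersetCard h (univ : Finset γ)
  have hsplit : {H ∈ P | s ≤ |∑ x ∈ H, b x|}
      ⊆ {H ∈ P | s ≤ ∑ x ∈ H, b x} ∪ {H ∈ P | s ≤ ∑ x ∈ H, -b x} := by
    intro H
    simp only [mem_filter, mem_union, sum_neg_distrib, le_abs]
    tauto
  have hupper := card_filter_le_sum_le hcard hh hsum hc hc0 hs
  have hlower := card_filter_le_sum_le (b := fun x => -b x) hcard hh
    (by rw [sum_neg_distrib, hsum, neg_zero])
    (fun x x' => by simpa only [neg_sub_neg] using hc x' x) hc0 hs
  calc (#{H ∈ P | s ≤ |∑ x ∈ H, b x|} : ℝ)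
      ≤ #{H ∈ P | s ≤ ∑ x ∈ H, b x} + #{H ∈ P | s ≤ ∑ x ∈ H, -b x} := by
        exact_mod_cast (card_le_card hsplit).trans (card_union_le _ _)
    _ ≤ _ := by linarith

end Hoeffding

theorem abs_log_le_of_abs_sub_one_le {x v : ℝ} (hv : v ≤ 1) (hx : |x - 1| ≤ v / 2) :
    |log x| ≤ v := by
  obtain ⟨hlo, hhi⟩ := abs_le.1 hx
  have hx0 : 0 < x := by linarith
  refine abs_le.2 ⟨?_, by linarith [log_le_sub_one_of_pos hx0]⟩
  have : x⁻¹ ≤ 1 + v := by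
    rw [inv_le_iff_one_le_mul₀ hx0]
    nlinarith
  linarith [one_sub_inv_le_log_of_pos hx0]

theorem sum_div_card_le_mul_sum_div_card {α : Type*} {a : α → ℝ} {k : ℝ} {S T : Finset α}
    (hS : S.Nonempty) (hT : T.Nonempty) (h : ∀ x ∈ S, ∀ x' ∈ T, a x ≤ k * a x') :
    (∑ x ∈ S, a x) / #S ≤ k * ((∑ x ∈ T, a x) / #T) := by
  have hST : (∑ x ∈ S, a x) * #T ≤ #S * (k * ∑ x ∈ T, a x) := by
    calc (∑ x ∈ S, a x) * #T = ∑ x ∈ S, ∑ _x' ∈ T, a x := by simp [sum_mul, mul_comm]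
      _ ≤ ∑ _x ∈ S, ∑ x' ∈ T, k * a x' := by gcongr with x hx x' hx'; exact h x hx x' hx'
      _ = #S * (k * ∑ x ∈ T, a x) := by simp [mul_sum]
  have hS' : (0 : ℝ) < #S := by exact_mod_cast hS.card_pos
  have hT' : (0 : ℝ) < #T := by exact_mod_cast hT.card_pos
  rw [div_le_iff₀ hS', mul_div_assoc', div_mul_eq_mul_div, le_div_iff₀ hT']
  linarith

theorem summable_of_tsum_eq_one {ι : Type*} {f : ι → ℝ} (hf : ∑' i, f i = 1) :
    Summable f := by
  by_contra hs
  simp [tsum_eq_zero_of_not_summable hs] at hf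

theorem one_sub_inv_le_card_filter_forall_lt_div {ι κ : Type*} [Fintype ι] {P : Finset κ}
    (hP : P.Nonempty) {X : ι → κ → ℝ} (hX : ∀ i H, 0 ≤ X i H) {m : ℝ} (hm0 : 0 < m)
    (hm : ∀ i, ∑ H ∈ P, X i H ≤ m * #P) {t : ℝ} (ht : 0 < t)
    [DecidablePred fun H => ∀ i, X i H < t * m * Fintype.card ι] :
    1 - t⁻¹ ≤ #{H ∈ P | ∀ i, X i H < t * m * Fintype.card ι} / (#P : ℝ) := by
  set bad := {H ∈ P | ¬ ∀ i, X i H < t * m * Fintype.card ι}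
  have hsplit : (#{H ∈ P | ∀ i, X i H < t * m * Fintype.card ι} : ℝ) + #bad = #P := by
    exact_mod_cast card_filter_add_card_filter_not _
  have hmarkov : t * m * Fintype.card ι * #bad ≤ Fintype.card ι * (m * #P) := by
    calc t * m * Fintype.card ι * #bad ≤ ∑ H ∈ bad, ∑ i, X i H := by
          rw [mul_comm, ← nsmul_eq_mul]
          refine card_nsmul_le_sum _ _ _ fun H hH => ?_
          obtain ⟨i, hi⟩ := not_forall.1 (mem_filter.1 hH).2
          exact (not_lt.1 hi).trans (single_le_sum (fun j _ => hX j H) (mem_univ i))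
      _ ≤ ∑ H ∈ P, ∑ i, X i H :=
          sum_le_sum_of_subset_of_nonneg (filter_subset _ _) fun H _ _ =>
            sum_nonneg fun i _ => hX i H
      _ = ∑ i, ∑ H ∈ P, X i H := sum_comm
      _ ≤ Fintype.card ι * (m * #P) := by simpa using sum_le_sum fun i (_ : i ∈ univ) => hm i
  have hbad : t * #bad ≤ #P := by
    rcases (Fintype.card ι).eq_zero_or_pos with hι | hι
    · have : IsEmpty ι := Fintype.card_eq_zero_iff.1 hι
      simp [bad]
    refine le_of_mul_le_mul_left ?_ (by positivity : (0 : ℝ) < m * Fintype.card ι)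
    linarith
  have hP' : (0 : ℝ) < #P := by exact_mod_cast hP.card_pos
  have : (#bad : ℝ) ≤ #P / t := by rwa [le_div_iff₀ ht, mul_comm]
  rw [le_div_iff₀ hP', sub_mul, one_mul, inv_mul_eq_div]
  linarith

noncomputable def leakThreshold (ε β : ℝ) (d : ℕ) : ℝ :=
  (exp (2 * ε) - 1) * √(4 / d * log (2 / β))

section LeakThreshold

variable {ε β : ℝ} {d : ℕ}

theorem leakThreshold_sq (hβ : β ∈ Set.Ioo (0 : ℝ) 1) :
    leakThreshold ε β d ^ 2 = 4 * (exp (2 * ε) - 1) ^ 2 * log (2 / β) / d := by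
  have hL : 0 ≤ log (2 / β) := log_nonneg ((one_le_div hβ.1).2 (by linarith [hβ.2]))
  rw [leakThreshold, mul_pow, sq_sqrt (by positivity)]
  ring

theorem leakThreshold_pos (hε : 0 < ε) (hβ : β ∈ Set.Ioo (0 : ℝ) 1) (hd : 0 < d) :
    0 < leakThreshold ε β d := by
  have hC : 0 < exp (2 * ε) - 1 := sub_pos.2 (one_lt_exp_iff.2 (by linarith))
  have hL : 0 < log (2 / β) := log_pos ((one_lt_div hβ.1).2 (by linarith [hβ.2]))
  unfold leakThreshold
  positivity

theorem leakThreshold_le_one (hε : 0 < ε) (hβ : β ∈ Set.Ioo (0 : ℝ) 1) (hd : 0 < d)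
    (hd2 : 4 * (exp (2 * ε) - 1) ^ 2 * log (2 / β) < d) : leakThreshold ε β d ≤ 1 := by
  refine (sq_le_one_iff₀ (leakThreshold_pos hε hβ hd).le).1 ?_
  rw [leakThreshold_sq hβ, div_le_one (by positivity)]
  exact hd2.le

theorem two_mul_exp_neg_leakThreshold {h : ℕ} (hdh : d = 2 * h) (hh : 0 < h) (hε : 0 < ε)
    (hβ : β ∈ Set.Ioo (0 : ℝ) 1) :
    2 * exp (-(h * leakThreshold ε β d ^ 2 / (2 * (exp (2 * ε) - 1) ^ 2))) = β := by
  have hC : 0 < exp (2 * ε) - 1 := sub_pos.2 (one_lt_exp_iff.2 (by linarith))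
  have hdh' : (d : ℝ) = 2 * h := by exact_mod_cast hdh
  have : (h : ℝ) * leakThreshold ε β d ^ 2 / (2 * (exp (2 * ε) - 1) ^ 2) = log (2 / β) := by
    rw [leakThreshold_sq hβ, hdh']
    field_simp
    norm_num
  rw [this, exp_neg, exp_log (div_pos two_pos hβ.1), inv_div]
  field_simp [hβ.1.ne']

end LeakThreshold

section Randomizer

variable {d : ℕ} {Y : Type*} {R : Fin d → Y → ℝ} {ε : ℝ}

theorem probU_nonneg (hR0 : ∀ x y, 0 ≤ R x y) (S : Finset (Fin d)) (y : Y) :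
    0 ≤ probU R S y :=
  div_nonneg (sum_nonneg fun x _ => hR0 x y) (Nat.cast_nonneg _)

theorem probU_le_exp_mul_probU {y : Y} (hpriv : ∀ x x', R x y ≤ exp ε * R x' y)
    {S T : Finset (Fin d)} (hS : S.Nonempty) (hT : T.Nonempty) :
    probU R S y ≤ exp ε * probU R T y :=
  sum_div_card_le_mul_sum_div_card hS hT fun x _ x' _ => hpriv x x'

theorem abs_sub_le_of_private {y : Y} (hε : 0 ≤ ε) (hR0 : ∀ x y, 0 ≤ R x y)
    (hpriv : ∀ x x', R x y ≤ exp ε * R x' y) (x x' : Fin d) :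
    |R x y - R x' y| ≤ (exp (2 * ε) - 1) * probU R univ y := by
  have hp := probU_nonneg hR0 univ y
  have he : 1 ≤ exp ε := one_le_exp hε
  have he2 : exp (2 * ε) = exp ε * exp ε := by rw [← exp_add, two_mul]
  have hup : ∀ x x', R x y - R x' y ≤ (exp (2 * ε) - 1) * probU R univ y := by
    intro x x'
    have hx' : R x' y ≤ exp ε * probU R univ y := by
      simpa [probU] using probU_le_exp_mul_probU hpriv (singleton_nonempty x') ⟨x', mem_univ _⟩
    nlinarith [hpriv x x', mul_le_mul_of_nonneg_left hx' (sub_nonneg.2 he),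
      mul_nonneg (sub_nonneg.2 he) hp]
  exact abs_sub_le_iff.2 ⟨hup x x', hup x' x⟩

theorem sum_sub_probU_univ_eq_zero (hd : d ≠ 0) (y : Y) :
    ∑ x, (R x y - probU R univ y) = 0 := by
  rw [sum_sub_distrib, sum_const, probU, card_univ, Fintype.card_fin, nsmul_eq_mul]
  field_simp
  ring

-- `Pr[R(U) = y] = 0` turns the likelihood ratio into `q / 0 = 0`, whose logarithm is `0`.
theorem not_leaky_of_probU_univ_eq_zero {H : Finset (Fin d)} {v : ℝ} {y : Y} (hv : 0 ≤ v)
    (hp : probU R univ y = 0) : ¬ leaky R H v y := by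
  simp [leaky, hp, hv]

theorem le_abs_sum_sub_of_leaky {H : Finset (Fin d)} {v : ℝ} {y : Y} (hv : v ≤ 1)
    (hp : 0 < probU R univ y) (hH : H.Nonempty) (hl : leaky R H v y) :
    #H * (probU R univ y * v / 2) ≤ |∑ x ∈ H, (R x y - probU R univ y)| := by
  set p := probU R univ y
  have hH' : (#H : ℝ) ≠ 0 := by exact_mod_cast hH.card_pos.ne'
  have hsumH : ∑ x ∈ H, (R x y - p) = #H * (probU R H y - p) := by
    rw [sum_sub_distrib, sum_const, nsmul_eq_mul, probU]
    field_simp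
  rw [hsumH, abs_mul, Nat.abs_cast]
  gcongr
  by_contra hlt
  refine hl.not_ge (abs_log_le_of_abs_sub_one_le hv ?_)
  rw [div_sub_one hp.ne', abs_div, abs_of_pos hp, div_le_iff₀ hp]
  linarith

theorem card_filter_leaky_le {h : ℕ} {y : Y} (hdh : d = 2 * h) (hh : 0 < h) (hε : 0 < ε)
    (hR0 : ∀ x y, 0 ≤ R x y) (hpriv : ∀ x x', R x y ≤ exp ε * R x' y) {v : ℝ}
    (hv0 : 0 < v) (hv1 : v ≤ 1) :
    (#{H ∈ powersetCard h (univ : Finset (Fin d)) | leaky R H v y} : ℝ)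
      ≤ 2 * #(powersetCard h (univ : Finset (Fin d)))
        * exp (-(h * v ^ 2 / (2 * (exp (2 * ε) - 1) ^ 2))) := by
  set P := powersetCard h (univ : Finset (Fin d))
  set p := probU R univ y
  rcases (probU_nonneg hR0 univ y : 0 ≤ p).eq_or_lt with hp | hp
  · rw [filter_false_of_mem fun H _ => not_leaky_of_probU_univ_eq_zero hv0.le hp.symm,
      card_empty, Nat.cast_zero]
    positivity
  replace hp : 0 < p := hp
  set C := exp (2 * ε) - 1
  have hC : 0 < C := sub_pos.2 (one_lt_exp_iff.2 (by linarith))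
  have hsubset : {H ∈ P | leaky R H v y}
      ⊆ {H ∈ P | h * (p * v / 2) ≤ |∑ x ∈ H, (R x y - p)|} := by
    intro H
    simp only [mem_filter]
    rintro ⟨hH, hl⟩
    have hcard : #H = h := (mem_powersetCard.1 hH).2
    exact ⟨hH, hcard ▸ le_abs_sum_sub_of_leaky hv1 hp (card_pos.1 (hcard ▸ hh)) hl⟩
  calc (#{H ∈ P | leaky R H v y} : ℝ)
      ≤ #{H ∈ P | h * (p * v / 2) ≤ |∑ x ∈ H, (R x y - p)|} := by
        exact_mod_cast card_le_card hsubset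
    _ ≤ 2 * #P * exp (-(2 * (h * (p * v / 2)) ^ 2 / (h * (C * p) ^ 2))) :=
        card_filter_le_abs_sum_le (by simp [hdh]) hh (sum_sub_probU_univ_eq_zero (by omega) y)
          (fun x x' => by simpa using abs_sub_le_of_private hε.le hR0 hpriv x x')
          (by positivity) (by positivity)
    _ = 2 * #P * exp (-(h * v ^ 2 / (2 * C ^ 2))) := by
        congr 3
        field_simp

theorem summable_probU (hR1 : ∀ x, ∑' y, R x y = 1) (S : Finset (Fin d)) :
    Summable (probU R S) :=
  (summable_sum fun x _ => summable_of_tsum_eq_one (hR1 x)).div_const _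

theorem tsum_probU_univ (hd : d ≠ 0) (hR1 : ∀ x, ∑' y, R x y = 1) :
    ∑' y, probU R univ y = 1 := by
  simp only [probU]
  rw [tsum_div_const, Summable.tsum_finsetSum fun x _ => summable_of_tsum_eq_one (hR1 x)]
  simp [hR1, hd]

theorem probLeak_nonneg (hR0 : ∀ x y, 0 ≤ R x y) (S H : Finset (Fin d)) (v : ℝ) :
    0 ≤ probLeak R S H v :=
  tsum_nonneg fun y => by split_ifs <;> simp [probU_nonneg hR0]

theorem summable_ite_leaky_probU (hR0 : ∀ x y, 0 ≤ R x y) (hR1 : ∀ x, ∑' y, R x y = 1)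
    (S H : Finset (Fin d)) (v : ℝ) :
    Summable fun y => if leaky R H v y then probU R S y else 0 :=
  (summable_probU hR1 S).of_nonneg_of_le (fun y => by split_ifs <;> simp [probU_nonneg hR0])
    fun y => by split_ifs <;> simp [probU_nonneg hR0]

theorem sum_probLeak_le (hd : d ≠ 0) (hR0 : ∀ x y, 0 ≤ R x y) (hR1 : ∀ x, ∑' y, R x y = 1)
    {P : Finset (Finset (Fin d))} {v δ : ℝ}
    (hleak : ∀ y, (#{H ∈ P | leaky R H v y} : ℝ) ≤ δ * #P) :
    ∑ H ∈ P, probLeak R univ H v ≤ δ * #P := by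
  have hcount : ∀ y, ∑ H ∈ P, (if leaky R H v y then probU R univ y else 0)
      = #{H ∈ P | leaky R H v y} * probU R univ y := fun y => by
    rw [← sum_filter, sum_const, nsmul_eq_mul]
  calc ∑ H ∈ P, probLeak R univ H v
      = ∑' y, ∑ H ∈ P, (if leaky R H v y then probU R univ y else 0) :=
        (Summable.tsum_finsetSum fun H _ => summable_ite_leaky_probU hR0 hR1 univ H v).symm
    _ ≤ ∑' y, δ * #P * probU R univ y := by
        refine Summable.tsum_le_tsum (fun y => ?_)
          (summable_sum fun H _ => summable_ite_leaky_probU hR0 hR1 univ H v)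
          ((summable_probU hR1 univ).mul_left _)
        rw [hcount]
        exact mul_le_mul_of_nonneg_right (hleak y) (probU_nonneg hR0 univ y)
    _ = δ * #P := by rw [tsum_mul_left, tsum_probU_univ hd hR1, mul_one]

theorem probLeak_le_exp_mul_probLeak (hR0 : ∀ x y, 0 ≤ R x y)
    (hR1 : ∀ x, ∑' y, R x y = 1) (hpriv : ∀ x x' y, R x y ≤ exp ε * R x' y)
    {H : Finset (Fin d)} (hH : H.Nonempty) (v : ℝ) :
    probLeak R H H v ≤ exp ε * probLeak R univ H v := by
  rw [probLeak, probLeak, ← tsum_mul_left]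
  refine Summable.tsum_le_tsum (fun y => ?_) (summable_ite_leaky_probU hR0 hR1 H H v)
    ((summable_ite_leaky_probU hR0 hR1 univ H v).mul_left _)
  split_ifs
  · exact probU_le_exp_mul_probU (fun x x' => hpriv x x' y) hH (hH.mono (subset_univ _))
  · simp

theorem sum_probLeak_univ_le {β : ℝ} {h : ℕ} (hdh : d = 2 * h) (hh : 0 < h) (hε : 0 < ε)
    (hβ : β ∈ Set.Ioo (0 : ℝ) 1) (hd2 : 4 * (exp (2 * ε) - 1) ^ 2 * log (2 / β) < d)
    (hR0 : ∀ x y, 0 ≤ R x y) (hR1 : ∀ x, ∑' y, R x y = 1)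
    (hpriv : ∀ x x' y, R x y ≤ exp ε * R x' y) :
    ∑ H ∈ powersetCard h (univ : Finset (Fin d)), probLeak R univ H (leakThreshold ε β d)
      ≤ β * #(powersetCard h (univ : Finset (Fin d))) := by
  refine sum_probLeak_le (by omega) hR0 hR1 fun y => ?_
  calc _ ≤ _ := card_filter_leaky_le hdh hh hε hR0 (fun x x' => hpriv x x' y)
        (leakThreshold_pos hε hβ (by omega)) (leakThreshold_le_one hε hβ (by omega) hd2)
    _ = β * #(powersetCard h (univ : Finset (Fin d))) := by
        rw [mul_comm 2, mul_assoc, two_mul_exp_neg_leakThreshold hdh hh hε hβ, mul_comm]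

end Randomizer

theorem stmt_7_general {Y : Type*} (ε β : ℝ) (n d : ℕ)
    (hε : 0 < ε) (hβ : β ∈ Set.Ioo (0 : ℝ) 1) (hd : Even d)
    (hd2 : 4 * (Real.exp (2 * ε) - 1) ^ 2 * Real.log (2 / β) < (d : ℝ))
    (R : Fin n → Fin d → Y → ℝ)
    (hR0 : ∀ i x y, 0 ≤ R i x y) (hR1 : ∀ i x, ∑' y, R i x y = 1)
    (hpriv : ∀ i x x' y, R i x y ≤ Real.exp ε * R i x' y) :
    5 / 6 ≤
      (((Finset.powersetCard (d / 2) (Finset.univ : Finset (Fin d))).filter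
          (fun H =>
            (∀ i : Fin n,
              probLeak (R i) Finset.univ H
                ((Real.exp (2 * ε) - 1) * Real.sqrt (4 / (d : ℝ) * Real.log (2 / β)))
                < 6 * β * n) ∧
            (∀ i : Fin n,
              probLeak (R i) H H
                ((Real.exp (2 * ε) - 1) * Real.sqrt (4 / (d : ℝ) * Real.log (2 / β)))
                < 6 * Real.exp ε * β * n))).card : ℝ)
        / ((Finset.powersetCard (d / 2) (Finset.univ : Finset (Fin d))).card : ℝ) := by
  have hd0 : 0 < d := by
    have hL : 0 ≤ log (2 / β) := log_nonneg ((one_le_div hβ.1).2 (by linarith [hβ.2]))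
    have : (0 : ℝ) ≤ 4 * (exp (2 * ε) - 1) ^ 2 * log (2 / β) := by positivity
    exact_mod_cast this.trans_lt hd2
  have hdh : d = 2 * (d / 2) := (Nat.two_mul_div_two_of_even hd).symm
  have hh : 0 < d / 2 := by omega
  have hP : (powersetCard (d / 2) (univ : Finset (Fin d))).Nonempty :=
    powersetCard_nonempty.2 (by simp; omega)
  calc (5 : ℝ) / 6 = 1 - 6⁻¹ := by norm_num
    _ ≤ #{H ∈ powersetCard (d / 2) univ | ∀ i, probLeak (R i) univ H (leakThreshold ε β d)
          < 6 * β * Fintype.card (Fin n)} / (#(powersetCard (d / 2) univ) : ℝ) :=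
        one_sub_inv_le_card_filter_forall_lt_div hP (fun i H => probLeak_nonneg (hR0 i) univ H _)
          hβ.1 (fun i => sum_probLeak_univ_le hdh hh hε hβ hd2 (hR0 i) (hR1 i) (hpriv i))
          (by norm_num)
    _ ≤ _ := by
        refine div_le_div_of_nonneg_right ?_ (Nat.cast_nonneg _)
        refine Nat.cast_le.2 (card_le_card fun H hH => ?_)
        simp only [mem_filter, Fintype.card_fin] at hH ⊢
        have hne : H.Nonempty := card_pos.1 ((mem_powersetCard.1 hH.1).2 ▸ hh)
        refine ⟨hH.1, hH.2, fun i => ?_⟩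
        exact ((probLeak_le_exp_mul_probLeak (hR0 i) (hR1 i) (hpriv i) hne _).trans_lt
          (mul_lt_mul_of_pos_left (hH.2 i) (exp_pos ε))).trans_eq (by ring)

/-- for `ε > 0`, `β ∈ (0,1)`, even `d > 4(e^{2ε}-1)² ln(2/β)`, and `n`
`ε`-private randomizers `R_1,…,R_n` from `[d]` to a countable `𝒴`: if `H` is
uniform among size-`d/2` subsets of `[d]`, then with probability at least `5/6`
over `H`, with `v = (e^{2ε}-1)√((4/d) ln(2/β))`, for every `i ∈ [n]` both
`Pr[R_i(U) ∈ Leak(v, H, R_i)] < 6βn` and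
`Pr[R_i(U_H) ∈ Leak(v, H, R_i)] < 6 e^ε βn`. -/
theorem stmt_7 {Y : Type*} [Countable Y] (ε β : ℝ) (n d : ℕ)
    (hε : 0 < ε) (hβ : β ∈ Set.Ioo (0 : ℝ) 1) (hd : Even d)
    (hd2 : 4 * (Real.exp (2 * ε) - 1) ^ 2 * Real.log (2 / β) < (d : ℝ))
    (R : Fin n → Fin d → Y → ℝ)
    (hR0 : ∀ i x y, 0 ≤ R i x y) (hR1 : ∀ i x, ∑' y, R i x y = 1)
    (hpriv : ∀ i x x' y, R i x y ≤ Real.exp ε * R i x' y) :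
    5 / 6 ≤
      (((Finset.powersetCard (d / 2) (Finset.univ : Finset (Fin d))).filter
          (fun H =>
            (∀ i : Fin n,
              probLeak (R i) Finset.univ H
                ((Real.exp (2 * ε) - 1) * Real.sqrt (4 / (d : ℝ) * Real.log (2 / β)))
                < 6 * β * n) ∧
            (∀ i : Fin n,
              probLeak (R i) H H
                ((Real.exp (2 * ε) - 1) * Real.sqrt (4 / (d : ℝ) * Real.log (2 / β)))
                < 6 * Real.exp ε * β * n))).card : ℝ)
        / ((Finset.powersetCard (d / 2) (Finset.univ : Finset (Fin d))).card : ℝ) :=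
  stmt_7_general ε β n d hε hβ hd hd2 R hR0 hR1 hpriv
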